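/- arXiv:1004.4041 — 2 statements merged into one kernel-verified Lean document; each statement's English description precedes it below -/
import Mathlib

section
/- Suppose Ḡ is a family of m subsets of {1,...,n}, each of size d, such that (i) |r ∩ s| ∈ {λ̄, λ̄−1} for all distinct r,s ∈ Ḡ, where λ̄ = max_{r≠s}|r∩s|, and (ii) every element i is contained in either k̄ or k̄−1 sets, where k̄ = ⌈md/n⌉. Then Ḡ minimizes max_{r,s∈G, r≠s} |r ∩ s| over all families G of m subsets of {1,...,n} of size d. -/
section ThmAux

open Finset

private lemma inter_card_eq_sum (n : ℕ) (r s : Finset (Fin n)) : (r ∩ s).card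
      = ∑ i : Fin n, (if i ∈ r then 1 else 0) * (if i ∈ s then 1 else 0) := by
  rw [show (r ∩ s).card = (Finset.univ.filter (fun i => i ∈ r ∧ i ∈ s)).card by
    congr 1; ext i; simp [Finset.mem_inter]]
  rw [Finset.card_filter]
  apply Finset.sum_congr rfl
  intro i _
  by_cases h1 : i ∈ r <;> by_cases h2 : i ∈ s <;> simp [h1, h2]

private lemma count_sum (n : ℕ) (G : Finset (Finset (Fin n))) :
    ∑ i : Fin n, (G.filter (fun r => i ∈ r)).card = ∑ r ∈ G, r.card := by
  simp only [Finset.card_filter]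
  rw [Finset.sum_comm]
  apply Finset.sum_congr rfl
  intro r _
  rw [Finset.card_eq_sum_ones r, Finset.sum_ite_mem]
  simp

private lemma prod_sum (n : ℕ) (G : Finset (Finset (Fin n))) :
    ∑ r ∈ G, ∑ s ∈ G, (r ∩ s).card
      = ∑ i : Fin n, ((G.filter (fun r => i ∈ r)).card)^2 := by
  calc ∑ r ∈ G, ∑ s ∈ G, (r ∩ s).card
      = ∑ r ∈ G, ∑ s ∈ G, ∑ i : Fin n,
          (if i ∈ r then 1 else 0) * (if i ∈ s then 1 else 0) := by
        simp only [inter_card_eq_sum]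
    _ = ∑ r ∈ G, ∑ i : Fin n, ∑ s ∈ G,
          (if i ∈ r then 1 else 0) * (if i ∈ s then 1 else 0) :=
        Finset.sum_congr rfl (fun r _ => Finset.sum_comm)
    _ = ∑ i : Fin n, ∑ r ∈ G, ∑ s ∈ G,
          (if i ∈ r then 1 else 0) * (if i ∈ s then 1 else 0) :=
        Finset.sum_comm
    _ = ∑ i : Fin n, ((G.filter (fun r => i ∈ r)).card)^2 := by
        apply Finset.sum_congr rfl
        intro i _
        rw [← Finset.sum_mul_sum]
        rw [Finset.card_filter]
        ring

private lemma sum_diag' (n : ℕ) (G : Finset (Finset (Fin n)))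
    (f : Finset (Fin n) × Finset (Fin n) → ℕ) :
    ∑ p ∈ G.diag, f p = ∑ r ∈ G, f (r, r) := by
  rw [show G.diag = G.image (fun a => (a,a)) by
    ext ⟨a,b⟩; simp only [Finset.mem_diag, Finset.mem_image]; constructor
    · rintro ⟨h1, h2⟩; exact ⟨a, h1, by simp [h2]⟩
    · rintro ⟨c, hc, h⟩; cases h; exact ⟨hc, rfl⟩]
  rw [Finset.sum_image (by simp)]

/-- Off-diagonal sum identity, in `ℤ`. -/
private lemma offDiag_sum (n m d : ℕ) (G : Finset (Finset (Fin n)))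
    (hcard : G.card = m) (hd : ∀ r ∈ G, r.card = d) :
    (∑ p ∈ G.offDiag, ((p.1 ∩ p.2).card : ℤ))
      = ∑ i : Fin n, (((G.filter (fun r => i ∈ r)).card : ℤ))^2 - m * d := by
  have hsplit : ∑ p ∈ G.diag, ((p.1 ∩ p.2).card)
      + ∑ p ∈ G.offDiag, ((p.1 ∩ p.2).card)
      = ∑ p ∈ G ×ˢ G, ((p.1 ∩ p.2).card) := by
    rw [← Finset.sum_union (Finset.disjoint_diag_offDiag G), Finset.diag_union_offDiag]
  have hdiag : ∑ p ∈ G.diag, ((p.1 ∩ p.2).card) = m * d := by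
    rw [sum_diag' n G (fun p => (p.1 ∩ p.2).card)]
    calc ∑ r ∈ G, (r ∩ r).card = ∑ r ∈ G, d := by
          apply Finset.sum_congr rfl; intro r hr; rw [Finset.inter_self]; exact hd r hr
      _ = m * d := by rw [Finset.sum_const, hcard, smul_eq_mul]
  have hprod : ∑ p ∈ G ×ˢ G, ((p.1 ∩ p.2).card)
      = ∑ i : Fin n, ((G.filter (fun r => i ∈ r)).card)^2 := by
    rw [Finset.sum_product]; exact prod_sum n G
  have h1 := hsplit
  rw [hdiag, hprod] at h1
  have h2 := congrArg (Nat.cast : ℕ → ℤ) h1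
  push_cast at h2
  linarith

/-- Integer tangent-line inequality for squares. -/
private lemma sq_tangent (q x : ℤ) : q^2 + (2*q+1)*(x - q) ≤ x^2 := by
  have h : 0 ≤ (x - q) * (x - q - 1) := by
    rcases le_or_gt x q with h | h
    · have h1 : x - q ≤ 0 := by linarith
      have h2 : x - q - 1 ≤ 0 := by linarith
      nlinarith
    · have h1 : 1 ≤ x - q := by linarith
      nlinarith
  nlinarith

end ThmAux

/-- Theorem 3: a near-balanced design `Ḡ` (pairwise intersections all `λ̄` or `λ̄−1`,
replication numbers all `k̄ = ⌈md/n⌉` or `k̄−1`) minimizes the maximum pairwise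
intersection among all families of `m` subsets of `{1,…,n}` of size `d`. -/
theorem stmt_7 (n m d : ℕ) (hn : 0 < n) (hm : 2 ≤ m)
    (Gb : Finset (Finset (Fin n))) (hGbcard : Gb.card = m)
    (hGbd : ∀ r ∈ Gb, r.card = d)
    (hi : ∀ r ∈ Gb, ∀ s ∈ Gb, r ≠ s →
      (r ∩ s).card = Gb.offDiag.sup (fun p => (p.1 ∩ p.2).card) ∨
      (r ∩ s).card = Gb.offDiag.sup (fun p => (p.1 ∩ p.2).card) - 1)
    (hii : ∀ i : Fin n,
      (Gb.filter (fun r => i ∈ r)).card = (m * d + n - 1) / n ∨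
      (Gb.filter (fun r => i ∈ r)).card = (m * d + n - 1) / n - 1) :
    ∀ G : Finset (Finset (Fin n)), G.card = m → (∀ r ∈ G, r.card = d) →
      Gb.offDiag.sup (fun p => (p.1 ∩ p.2).card)
        ≤ G.offDiag.sup (fun p => (p.1 ∩ p.2).card) := by
  intro G hGcard hGd
  set lb := Gb.offDiag.sup (fun p => (p.1 ∩ p.2).card) with hlb
  set lG := G.offDiag.sup (fun p => (p.1 ∩ p.2).card) with hlG
  rcases Nat.eq_zero_or_pos lb with h0 | hlbpos
  · simp [h0]
  set kb : Fin n → ℕ := fun i => (Gb.filter (fun r => i ∈ r)).card with hkb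
  set kG : Fin n → ℕ := fun i => (G.filter (fun r => i ∈ r)).card with hkG
  set kbar : ℕ := (m * d + n - 1) / n with hkbar
  -- replication sums
  have hsb : ∑ i : Fin n, (kb i : ℤ) = m * d := by
    have h1 := count_sum n Gb
    have h2 : ∑ r ∈ Gb, r.card = m * d := by
      calc ∑ r ∈ Gb, r.card = ∑ r ∈ Gb, d := Finset.sum_congr rfl hGbd
        _ = m * d := by rw [Finset.sum_const, hGbcard, smul_eq_mul]
    rw [h2] at h1
    have h3 := congrArg (Nat.cast : ℕ → ℤ) h1
    push_cast at h3
    exact h3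
  have hsG : ∑ i : Fin n, (kG i : ℤ) = m * d := by
    have h1 := count_sum n G
    have h2 : ∑ r ∈ G, r.card = m * d := by
      calc ∑ r ∈ G, r.card = ∑ r ∈ G, d := Finset.sum_congr rfl hGd
        _ = m * d := by rw [Finset.sum_const, hGcard, smul_eq_mul]
    rw [h2] at h1
    have h3 := congrArg (Nat.cast : ℕ → ℤ) h1
    push_cast at h3
    exact h3
  -- convexity: balanced replication minimizes sum of squares
  set q : ℤ := (kbar : ℤ) - 1 with hq
  have hkb_sq : ∀ i : Fin n, (kb i : ℤ)^2 = q^2 + (2*q+1)*((kb i : ℤ) - q) := by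
    intro i
    rcases hii i with h | h
    · have hk : kb i = kbar := h
      rw [hq, hk]; ring
    · have hk : kb i = kbar - 1 := h
      rcases Nat.eq_zero_or_pos kbar with hk0 | hkpos
      · have h1 : kb i = 0 := by omega
        have h2 : q = -1 := by rw [hq, hk0]; norm_num
        rw [h1, h2]; norm_num
      · have h3 : (kb i : ℤ) = q := by rw [hq, hk]; omega
        rw [h3]; ring
  have hconv : ∑ i : Fin n, (kb i : ℤ)^2 ≤ ∑ i : Fin n, (kG i : ℤ)^2 := by
    calc ∑ i : Fin n, (kb i : ℤ)^2
        = ∑ i : Fin n, (q^2 + (2*q+1)*((kb i : ℤ) - q)) :=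
          Finset.sum_congr rfl (fun i _ => hkb_sq i)
      _ = ∑ i : Fin n, (q^2 + (2*q+1)*((kG i : ℤ) - q)) := by
          simp only [Finset.sum_add_distrib, mul_sub, Finset.sum_sub_distrib,
            ← Finset.mul_sum, hsb, hsG]
      _ ≤ ∑ i : Fin n, (kG i : ℤ)^2 :=
          Finset.sum_le_sum (fun i _ => sq_tangent q (kG i))
  -- total intersection sums
  have hA : (∑ p ∈ Gb.offDiag, ((p.1 ∩ p.2).card : ℤ))
      ≤ ∑ p ∈ G.offDiag, ((p.1 ∩ p.2).card : ℤ) := by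
    rw [offDiag_sum n m d Gb hGbcard hGbd, offDiag_sum n m d G hGcard hGd]
    linarith
  -- the off-diagonal of Gb is nonempty and the sup is attained
  have hne : Gb.offDiag.Nonempty := by
    obtain ⟨a, ha, b, hb, hab⟩ := Finset.one_lt_card.mp (by omega : 1 < Gb.card)
    exact ⟨(a, b), Finset.mem_offDiag.mpr ⟨ha, hb, hab⟩⟩
  obtain ⟨p0, hp0, hp0eq⟩ := Finset.exists_mem_eq_sup Gb.offDiag hne
    (fun p => (p.1 ∩ p.2).card)
  -- lower bound for the Gb sum
  have hlower : ((lb : ℤ) - 1) * Gb.offDiag.card + 1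
      ≤ ∑ p ∈ Gb.offDiag, ((p.1 ∩ p.2).card : ℤ) := by
    rw [← Finset.sum_erase_add _ _ hp0]
    have h1' : ∀ p ∈ Gb.offDiag.erase p0, ((lb : ℤ) - 1) ≤ ((p.1 ∩ p.2).card : ℤ) := by
      intro p hp
      have hp' := Finset.mem_of_mem_erase hp
      have hpm := Finset.mem_offDiag.mp hp'
      rcases hi p.1 hpm.1 p.2 hpm.2.1 hpm.2.2 with h | h <;> omega
    have h1 := Finset.card_nsmul_le_sum (Gb.offDiag.erase p0)
      (fun p => ((p.1 ∩ p.2).card : ℤ)) ((lb : ℤ) - 1) h1'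
    rw [nsmul_eq_mul] at h1
    have h2 : (Gb.offDiag.erase p0).card = Gb.offDiag.card - 1 :=
      Finset.card_erase_of_mem hp0
    have h3 : 1 ≤ Gb.offDiag.card := Finset.card_pos.mpr hne
    have h4 : ((p0.1 ∩ p0.2).card : ℤ) = lb := by rw [← hp0eq]
    have h5 : ((Gb.offDiag.erase p0).card : ℤ) = (Gb.offDiag.card : ℤ) - 1 := by
      rw [h2]; omega
    rw [h5] at h1
    have hlb1 : (1 : ℤ) ≤ lb := by exact_mod_cast hlbpos
    nlinarith [h1, h4]
  -- upper bound for the G sum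
  have hupper : ∑ p ∈ G.offDiag, ((p.1 ∩ p.2).card : ℤ)
      ≤ (lG : ℤ) * G.offDiag.card := by
    have h2' : ∀ p ∈ G.offDiag, ((p.1 ∩ p.2).card : ℤ) ≤ (lG : ℤ) := by
      intro p hp
      exact_mod_cast Finset.le_sup (f := fun p => (p.1 ∩ p.2).card) hp
    have h2 := Finset.sum_le_card_nsmul G.offDiag
      (fun p => ((p.1 ∩ p.2).card : ℤ)) ((lG : ℤ)) h2'
    rw [nsmul_eq_mul] at h2
    linarith
  -- both off-diagonals have the same (positive) cardinality
  have hcardb : Gb.offDiag.card = m * m - m := by rw [Finset.offDiag_card, hGbcard]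
  have hcardG : G.offDiag.card = m * m - m := by rw [Finset.offDiag_card, hGcard]
  have hPpos : 0 < m * m - m := by nlinarith
  -- final chain
  have hchain : ((lb : ℤ) - 1) * (m * m - m : ℕ) + 1 ≤ (lG : ℤ) * (m * m - m : ℕ) := by
    calc ((lb : ℤ) - 1) * (m * m - m : ℕ) + 1
        = ((lb : ℤ) - 1) * Gb.offDiag.card + 1 := by rw [hcardb]
      _ ≤ ∑ p ∈ Gb.offDiag, ((p.1 ∩ p.2).card : ℤ) := hlower
      _ ≤ ∑ p ∈ G.offDiag, ((p.1 ∩ p.2).card : ℤ) := hA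
      _ ≤ (lG : ℤ) * G.offDiag.card := hupper
      _ = (lG : ℤ) * (m * m - m : ℕ) := by rw [hcardG]
  have hP : (0 : ℤ) < ((m * m - m : ℕ) : ℤ) := by exact_mod_cast hPpos
  have hfin : (lb : ℤ) - 1 < (lG : ℤ) := by
    by_contra hcon
    push_neg at hcon
    nlinarith
  omega
end

section
/- Let r, s be finite sets, i ∈ r \ s, and for each j let x̄_j ∈ [0,1] and a_{rj}, a_{sj} ∈ ℝ with |x̄_j − a_{rj}| ≤ δ and |x̄_j − a_{sj}| ≤ δ for some δ ∈ (0,1). Define e_r(u) = ∏_{j∈u}(x̄_j − a_{rj}) and e_s(u) = ∏_{j∈u}(x̄_j − a_{sj}). Then |x̄_i(1−x̄_i) · ∑_{k=2}^{|r∩s|} ∑_{v ⊆ r∩s, |v|=k} e_r(r\(v∪{i})) · e_s(s\v) · ∏_{j∈v} x̄_j(1−x̄_j)| ≤ (δ^{|r|+|s|−1}/4)·(1 + 1/(4δ^2))^{|r∩s|}. -/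
open Finset

/-!
Each summand is a product of `|r| - |v| - 1` factors bounded by `δ`, `|s| - |v|` factors bounded
by `δ` and `|v|` factors bounded by `1/4`, hence at most `δ^(|r|+|s|-1) (1/(4δ²))^|v|`. Summing
over all `v ⊆ r ∩ s` (not only those with `|v| ≥ 2`) and using the binomial theorem gives the
bound, the prefactor `x̄_i (1 - x̄_i)` contributing the remaining `1/4`.
-/

lemma abs_mul_one_sub_le_quarter {x : ℝ} (hx0 : 0 ≤ x) (hx1 : x ≤ 1) : |x * (1 - x)| ≤ 1 / 4 := by
  rw [abs_of_nonneg (mul_nonneg hx0 (sub_nonneg.mpr hx1))]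
  nlinarith [sq_nonneg (x - 1 / 2)]

lemma Finset.abs_prod_le_pow_card {ι : Type*} (u : Finset ι) {f : ι → ℝ} {c : ℝ}
    (h : ∀ j ∈ u, |f j| ≤ c) : |∏ j ∈ u, f j| ≤ c ^ u.card := by
  rw [abs_prod, ← prod_const]
  exact prod_le_prod (fun j _ => abs_nonneg _) h

lemma pow_mul_quarter_pow {δ : ℝ} (hδ : δ ≠ 0) (m k : ℕ) :
    δ ^ m * (1 / 4) ^ k = δ ^ (m + 2 * k) * (1 / (4 * δ ^ 2)) ^ k := by
  rw [pow_add, pow_mul, mul_assoc, ← mul_pow]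
  congr 2
  field_simp

lemma abs_sum_sum_powersetCard_le {ι : Type*} {S : Finset ι} {K : Finset ℕ}
    (hK : ∀ k ∈ K, k ≤ S.card) {F : Finset ι → ℝ} {C q : ℝ} (hC : 0 ≤ C) (hq : 0 ≤ q)
    (hF : ∀ v ⊆ S, |F v| ≤ C * q ^ v.card) :
    |∑ k ∈ K, ∑ v ∈ powersetCard k S, F v| ≤ C * (1 + q) ^ S.card := by
  have hlevel : ∀ k, |∑ v ∈ powersetCard k S, F v| ≤ S.card.choose k * (C * q ^ k) := by
    intro k
    rw [← card_powersetCard, ← nsmul_eq_mul, ← sum_const]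
    refine (abs_sum_le_sum_abs _ _).trans (sum_le_sum fun v hv => ?_)
    obtain ⟨hvS, rfl⟩ := mem_powersetCard.mp hv
    exact hF v hvS
  calc |∑ k ∈ K, ∑ v ∈ powersetCard k S, F v|
      ≤ ∑ k ∈ K, (S.card.choose k : ℝ) * (C * q ^ k) :=
        (abs_sum_le_sum_abs _ _).trans (sum_le_sum fun k _ => hlevel k)
    _ ≤ ∑ k ∈ range (S.card + 1), (S.card.choose k : ℝ) * (C * q ^ k) :=
        sum_le_sum_of_subset_of_nonneg
          (fun k hk => mem_range.mpr (Nat.lt_succ_of_le (hK k hk))) fun k _ _ => by positivity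
    _ = C * (1 + q) ^ S.card := by
        rw [add_comm 1 q, add_pow, mul_sum]
        exact sum_congr rfl fun k _ => by ring

lemma card_sdiff_insert_add_card_sdiff {ι : Type*} [DecidableEq ι] {r s v : Finset ι} {i : ι}
    (hi : i ∈ r \ s) (hv : v ⊆ r ∩ s) :
    (r \ insert i v).card + (s \ v).card + 2 * v.card = r.card + s.card - 1 := by
  obtain ⟨hir, his⟩ := mem_sdiff.mp hi
  have hiv : i ∉ v := fun h => his (mem_inter.mp (hv h)).2
  have hvr : v ⊆ r := hv.trans inter_subset_left
  have hvs : v ⊆ s := hv.trans inter_subset_right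
  have hir' : insert i v ⊆ r := insert_subset hir hvr
  have hcard : v.card + 1 ≤ r.card := by
    simpa [card_insert_of_notMem hiv] using card_le_card hir'
  rw [card_sdiff_of_subset hir', card_sdiff_of_subset hvs, card_insert_of_notMem hiv]
  have := card_le_card hvs
  omega

lemma abs_bias_summand_le {ι : Type*} [DecidableEq ι] {r s v : Finset ι} {i : ι}
    (hi : i ∈ r \ s) (hv : v ⊆ r ∩ s) {xb ar as : ι → ℝ} {δ : ℝ} (hδ0 : 0 < δ)
    (hx0 : ∀ j, 0 ≤ xb j) (hx1 : ∀ j, xb j ≤ 1)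
    (har : ∀ j, |xb j - ar j| ≤ δ) (has : ∀ j, |xb j - as j| ≤ δ) :
    |(∏ j ∈ r \ insert i v, (xb j - ar j)) * (∏ j ∈ s \ v, (xb j - as j)) *
        ∏ j ∈ v, xb j * (1 - xb j)|
      ≤ δ ^ (r.card + s.card - 1) * (1 / (4 * δ ^ 2)) ^ v.card := by
  rw [← card_sdiff_insert_add_card_sdiff hi hv, ← pow_mul_quarter_pow hδ0.ne', pow_add,
    abs_mul, abs_mul]
  gcongr
  · exact abs_prod_le_pow_card _ fun j _ => har j
  · exact abs_prod_le_pow_card _ fun j _ => has j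
  · exact abs_prod_le_pow_card _ fun j _ => abs_mul_one_sub_le_quarter (hx0 j) (hx1 j)

theorem stmt_10_general (ι : Type*) [DecidableEq ι] (r s : Finset ι) (i : ι)
    (hi : i ∈ r \ s) (xb ar as : ι → ℝ) (δ : ℝ) (hδ0 : 0 < δ)
    (hx0 : ∀ j, 0 ≤ xb j) (hx1 : ∀ j, xb j ≤ 1)
    (har : ∀ j, |xb j - ar j| ≤ δ) (has : ∀ j, |xb j - as j| ≤ δ) :
    |xb i * (1 - xb i) *
        ∑ k ∈ Finset.Icc 2 (r ∩ s).card,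
          ∑ v ∈ Finset.powersetCard k (r ∩ s),
            (∏ j ∈ r \ insert i v, (xb j - ar j)) *
              (∏ j ∈ s \ v, (xb j - as j)) * ∏ j ∈ v, xb j * (1 - xb j)|
      ≤ δ ^ (r.card + s.card - 1) / 4 * (1 + 1 / (4 * δ ^ 2)) ^ (r ∩ s).card := by
  have hsum := abs_sum_sum_powersetCard_le (K := Icc 2 (r ∩ s).card)
    (fun k hk => (mem_Icc.mp hk).2) (by positivity) (by positivity)
    fun v hv => abs_bias_summand_le hi hv hδ0 hx0 hx1 har has
  rw [abs_mul]
  calc _ ≤ 1 / 4 * (δ ^ (r.card + s.card - 1) * (1 + 1 / (4 * δ ^ 2)) ^ (r ∩ s).card) :=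
        mul_le_mul (abs_mul_one_sub_le_quarter (hx0 i) (hx1 i)) hsum (abs_nonneg _) (by norm_num)
    _ = _ := by ring

/-- Bound on the loopy-BP bias term `B_{rsi}` for `i ∈ r \ s`:
`|x̄_i(1−x̄_i) ∑_{k=2}^{|r∩s|} ∑_{v ⊆ r∩s, |v|=k} e_r(r\(v∪{i})) e_s(s\v) ∏_{j∈v} x̄_j(1−x̄_j)|
  ≤ (δ^{|r|+|s|−1}/4)(1 + 1/(4δ²))^{|r∩s|}`. -/
theorem stmt_10 (ι : Type*) [DecidableEq ι] (r s : Finset ι) (i : ι)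
    (hi : i ∈ r \ s) (xb ar as : ι → ℝ) (δ : ℝ) (hδ0 : 0 < δ) (hδ1 : δ < 1)
    (hx0 : ∀ j, 0 ≤ xb j) (hx1 : ∀ j, xb j ≤ 1)
    (har : ∀ j, |xb j - ar j| ≤ δ) (has : ∀ j, |xb j - as j| ≤ δ) :
    |xb i * (1 - xb i) *
        ∑ k ∈ Finset.Icc 2 (r ∩ s).card,
          ∑ v ∈ Finset.powersetCard k (r ∩ s),
            (∏ j ∈ r \ insert i v, (xb j - ar j)) *
              (∏ j ∈ s \ v, (xb j - as j)) * ∏ j ∈ v, xb j * (1 - xb j)|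
      ≤ δ ^ (r.card + s.card - 1) / 4 * (1 + 1 / (4 * δ ^ 2)) ^ (r ∩ s).card :=
  stmt_10_general ι r s i hi xb ar as δ hδ0 hx0 hx1 har has
end
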